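/- arXiv:2209.13282 — 2 statements merged into one kernel-verified Lean document; each statement's English description precedes it below -/
import Mathlib

section
/- Let A be a finite-dimensional unital algebra with coproduct Δ and counit, and let φ be a left integral on A with antipode S. If S is an anti-isomorphism of A, then ψ := φ ∘ S is a right integral on A with the same antipode S, i.e., S((ψ ⊗ ι)((c ⊗ 1)Δ(a))) = (ψ ⊗ ι)(Δ(c)(a ⊗ 1)) for all a, c ∈ A. -/
open TensorProduct

/-- `(ψ ⊗ ι)` as a map `A ⊗ A → A`. -/
noncomputable def lmapC {A : Type*} [AddCommGroup A] [Module ℂ A]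
    (ψ : A →ₗ[ℂ] ℂ) : A ⊗[ℂ] A →ₗ[ℂ] A :=
  (TensorProduct.lid ℂ A).toLinearMap ∘ₗ TensorProduct.map ψ LinearMap.id

/-- `(ι ⊗ φ)` as a map `A ⊗ A → A`. -/
noncomputable def rmapC {A : Type*} [AddCommGroup A] [Module ℂ A]
    (φ : A →ₗ[ℂ] ℂ) : A ⊗[ℂ] A →ₗ[ℂ] A :=
  (TensorProduct.rid ℂ A).toLinearMap ∘ₗ TensorProduct.map LinearMap.id φ

/-!
Applying `S` to `(φ ∘ S ⊗ ι)(y)` gives `(ι ⊗ φ)(σ y)`, where `σ = flip ∘ (S ⊗ S)`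
(`flipTensorMap S`) is anti-multiplicative with `σ ∘ Δ = Δ ∘ S` and `σ (c ⊗ 1) = 1 ⊗ S c`
(a surjective anti-homomorphism fixes `1`). Hence `S` carries the right-integral identity
for `(c, a)` to the left-integral identity for `(S a, S c)`, and `S` is injective.
-/

theorem map_one_of_antimul_surjective {M N : Type*} [MulOneClass M] [MulOneClass N]
    {f : M → N} (hanti : ∀ a b, f (a * b) = f b * f a) (hsurj : Function.Surjective f) :
    f 1 = 1 := by
  obtain ⟨b, hb⟩ := hsurj 1
  calc f 1 = f 1 * f b := by rw [hb, mul_one]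
    _ = f b := by rw [← hanti, mul_one]
    _ = 1 := hb

section FlipTensorMap

variable {A : Type*} [Ring A] [Algebra ℂ A]

noncomputable def flipTensorMap (S : A →ₗ[ℂ] A) : A ⊗[ℂ] A →ₗ[ℂ] A ⊗[ℂ] A :=
  (TensorProduct.comm ℂ A A).toLinearMap ∘ₗ TensorProduct.map S S

@[simp]
theorem flipTensorMap_tmul (S : A →ₗ[ℂ] A) (p q : A) :
    flipTensorMap S (p ⊗ₜ q) = S q ⊗ₜ S p :=
  rfl

theorem flipTensorMap_mul {S : A →ₗ[ℂ] A} (hSanti : ∀ a b : A, S (a * b) = S b * S a)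
    (x y : A ⊗[ℂ] A) : flipTensorMap S (x * y) = flipTensorMap S y * flipTensorMap S x := by
  induction x using TensorProduct.induction_on with
  | zero => simp
  | add x₁ x₂ hx₁ hx₂ => simp only [add_mul, mul_add, map_add, hx₁, hx₂]
  | tmul p q =>
    induction y using TensorProduct.induction_on with
    | zero => simp
    | add y₁ y₂ hy₁ hy₂ => simp only [add_mul, mul_add, map_add, hy₁, hy₂]
    | tmul p' q' => simp [Algebra.TensorProduct.tmul_mul_tmul, hSanti]

theorem apply_lmapC_comp (S : A →ₗ[ℂ] A) (φ : A →ₗ[ℂ] ℂ) (x : A ⊗[ℂ] A) :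
    S (lmapC (φ ∘ₗ S) x) = rmapC φ (flipTensorMap S x) := by
  induction x using TensorProduct.induction_on with
  | zero => simp
  | add x y hx hy => simp only [map_add, hx, hy]
  | tmul p q => simp [lmapC, rmapC]

end FlipTensorMap

theorem comp_antipode_is_right_integral_general
    {A : Type*} [Ring A] [Algebra ℂ A]
    (Δ : A →ₗ[ℂ] A ⊗[ℂ] A)
    (φ : A →ₗ[ℂ] ℂ)
    (S : A →ₗ[ℂ] A)
    -- φ is a left integral with antipode S
    (hS : ∀ a c : A,
      S (rmapC φ (Δ a * ((1 : A) ⊗ₜ[ℂ] c))) = rmapC φ (((1 : A) ⊗ₜ[ℂ] a) * Δ c))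
    -- S is an anti-isomorphism of A flipping the coproduct
    (hSbij : Function.Bijective S)
    (hSanti : ∀ a b : A, S (a * b) = S b * S a)
    (hSflip : ∀ a : A, Δ (S a) = (TensorProduct.comm ℂ A A) (TensorProduct.map S S (Δ a))) :
    ∀ a c : A,
      S (lmapC (φ ∘ₗ S) ((c ⊗ₜ[ℂ] (1 : A)) * Δ a)) =
        lmapC (φ ∘ₗ S) (Δ c * (a ⊗ₜ[ℂ] (1 : A))) := by
  intro a c
  have hflip : ∀ a : A, flipTensorMap S (Δ a) = Δ (S a) := fun a => (hSflip a).symm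
  have hS_one : S 1 = 1 := map_one_of_antimul_surjective hSanti hSbij.surjective
  apply hSbij.injective
  calc S (S (lmapC (φ ∘ₗ S) ((c ⊗ₜ[ℂ] (1 : A)) * Δ a)))
      = S (rmapC φ (Δ (S a) * ((1 : A) ⊗ₜ[ℂ] S c))) := by
        rw [apply_lmapC_comp, flipTensorMap_mul hSanti, hflip, flipTensorMap_tmul, hS_one]
    _ = rmapC φ (((1 : A) ⊗ₜ[ℂ] S a) * Δ (S c)) := hS (S a) (S c)
    _ = S (lmapC (φ ∘ₗ S) (Δ c * (a ⊗ₜ[ℂ] (1 : A)))) := by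
        rw [apply_lmapC_comp, flipTensorMap_mul hSanti, hflip, flipTensorMap_tmul, hS_one]

/-- If `φ` is a left integral on `A` with antipode `S`, and `S` is an
anti-isomorphism of `A` flipping the coproduct, then `ψ := φ ∘ S` is a right
integral on `A` with the same antipode `S`. -/
theorem comp_antipode_is_right_integral
    {A : Type*} [Ring A] [Algebra ℂ A] [FiniteDimensional ℂ A]
    (Δ : A →ₗ[ℂ] A ⊗[ℂ] A)
    (hcoassoc : ∀ a : A,
      (TensorProduct.assoc ℂ A A A) (TensorProduct.map Δ LinearMap.id (Δ a)) =
        TensorProduct.map LinearMap.id Δ (Δ a))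
    (ε : A →ₗ[ℂ] ℂ)
    (hε₁ : ∀ a : A, lmapC ε (Δ a) = a)
    (hε₂ : ∀ a : A, rmapC ε (Δ a) = a)
    (φ : A →ₗ[ℂ] ℂ)
    (S : A →ₗ[ℂ] A)
    -- φ is a left integral with antipode S
    (hS : ∀ a c : A,
      S (rmapC φ (Δ a * ((1 : A) ⊗ₜ[ℂ] c))) = rmapC φ (((1 : A) ⊗ₜ[ℂ] a) * Δ c))
    -- S is an anti-isomorphism of A flipping the coproduct
    (hSbij : Function.Bijective S)
    (hSanti : ∀ a b : A, S (a * b) = S b * S a)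
    (hSflip : ∀ a : A, Δ (S a) = (TensorProduct.comm ℂ A A) (TensorProduct.map S S (Δ a))) :
    ∀ a c : A,
      S (lmapC (φ ∘ₗ S) ((c ⊗ₜ[ℂ] (1 : A)) * Δ a)) =
        lmapC (φ ∘ₗ S) (Δ c * (a ⊗ₜ[ℂ] (1 : A))) :=
  comp_antipode_is_right_integral_general Δ φ S hS hSbij hSanti hSflip
end

section
/- Let A and B be finite-dimensional unital algebras with a non-degenerate pairing such that the counit ε on B (given by ε(b) = ⟨1_A, b⟩) is an algebra homomorphism. If there exists a faithful linear functional on B, then there exist a non-zero left invariant functional and a non-zero right invariant functional on A. -/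
open TensorProduct

/-- The pairing of `A ⊗ A` with the pair `(b, b')`, i.e. `x ⊗ y ↦ ⟨x,b⟩⟨y,b'⟩`. -/
noncomputable def pairTT {A B : Type*} [AddCommGroup A] [Module ℂ A]
    [AddCommGroup B] [Module ℂ B]
    (β : A →ₗ[ℂ] B →ₗ[ℂ] ℂ) (b b' : B) : A ⊗[ℂ] A →ₗ[ℂ] ℂ :=
  (LinearMap.mul' ℂ ℂ).comp (TensorProduct.map (β.flip b) (β.flip b'))

/-! The counit `ε = ⟨1, ·⟩` is a character of `B`, so its kernel `N` is an ideal of codimension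
one. Since `dim N^* < dim B`, some `h ≠ 0` has `ω (n * h) = 0` for all `n ∈ N`; as `B N ⊆ N`,
faithfulness of `ω` upgrades this to `N h = 0`, i.e. `b * h = ε b • h`. Pairing with `B`, this
identity is exactly the invariance `(ι ⊗ φ) Δ a = φ a • 1` of `φ = ⟨·, h⟩`. The mirror argument,
with `k * b = ε b • k`, gives the other functional. -/

section FaithfulFunctional

variable {K V : Type*} [Field K] [AddCommGroup V] [Module K V] [FiniteDimensional K V]

theorem LinearMap.exists_ne_zero_forall_mem_apply_eq_zero (F : V →ₗ[K] V →ₗ[K] K)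
    {N : Submodule K V} (hN : N ≠ ⊤) : ∃ v ≠ 0, ∀ n ∈ N, F n v = 0 := by
  have hdim : Module.finrank K (Module.Dual K N) < Module.finrank K V := by
    rw [Subspace.dual_finrank_eq]
    exact Submodule.finrank_lt hN
  obtain ⟨v, hv, hv0⟩ := Submodule.exists_mem_ne_zero_of_ne_bot
    (LinearMap.ker_ne_bot_of_finrank_lt (f := (F.domRestrict N).flip) hdim)
  exact ⟨v, hv0, fun n hn => LinearMap.congr_fun (LinearMap.mem_ker.mp hv) ⟨n, hn⟩⟩

variable {B : Type*} [Ring B] [Algebra K B] [FiniteDimensional K B]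
  (ε : B →ₐ[K] K) (ω : B →ₗ[K] K)

omit [FiniteDimensional K B] in
theorem AlgHom.ker_toLinearMap_ne_top : LinearMap.ker (ε : B →ₗ[K] K) ≠ ⊤ := fun h => by
  simpa using LinearMap.congr_fun (LinearMap.ker_eq_top.mp h) 1

theorem exists_ne_zero_forall_mul_left_eq_smul
    (hω : ∀ c : B, (∀ b : B, ω (b * c) = 0) → c = 0) :
    ∃ h : B, h ≠ 0 ∧ ∀ b, b * h = ε b • h := by
  obtain ⟨h, hh0, hN⟩ := ((LinearMap.mul K B).compr₂ ω).exists_ne_zero_forall_mem_apply_eq_zero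
    ε.ker_toLinearMap_ne_top
  have hann : ∀ n, ε n = 0 → n * h = 0 := fun n hn =>
    hω _ fun b => by simpa [← mul_assoc, hn] using hN (b * n)
  refine ⟨h, hh0, fun b => ?_⟩
  simpa [sub_mul, Algebra.smul_def, sub_eq_zero] using hann (b - algebraMap K B (ε b)) (by simp)

theorem exists_ne_zero_forall_mul_right_eq_smul
    (hω : ∀ b : B, (∀ c : B, ω (b * c) = 0) → b = 0) :
    ∃ k : B, k ≠ 0 ∧ ∀ b, k * b = ε b • k := by
  obtain ⟨k, hk0, hN⟩ :=
    ((LinearMap.mul K B).compr₂ ω).flip.exists_ne_zero_forall_mem_apply_eq_zero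
      ε.ker_toLinearMap_ne_top
  have hann : ∀ n, ε n = 0 → k * n = 0 := fun n hn =>
    hω _ fun c => by simpa [mul_assoc, hn] using hN (n * c)
  refine ⟨k, hk0, fun b => ?_⟩
  simpa [mul_sub, Algebra.commutes, Algebra.smul_def, sub_eq_zero] using
    hann (b - algebraMap K B (ε b)) (by simp)

end FaithfulFunctional

section Pairing

variable {A B : Type*}

section Module

variable [AddCommGroup A] [Module ℂ A] [AddCommGroup B] [Module ℂ B] (β : A →ₗ[ℂ] B →ₗ[ℂ] ℂ)

theorem apply_rmapC_flip (h b : B) (x : A ⊗[ℂ] A) :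
    β (rmapC (β.flip h) x) b = pairTT β b h x := by
  induction x using TensorProduct.induction_on with
  | zero => simp
  | tmul x y => simp [rmapC, pairTT, mul_comm]
  | add x y hx hy => simp [hx, hy]

theorem apply_lmapC_flip (k b : B) (x : A ⊗[ℂ] A) :
    β (lmapC (β.flip k) x) b = pairTT β k b x := by
  induction x using TensorProduct.induction_on with
  | zero => simp
  | tmul x y => simp [lmapC, pairTT]
  | add x y hx hy => simp [hx, hy]

theorem LinearMap.flip_apply_ne_zero (hβB : ∀ b : B, (∀ a : A, β a b = 0) → b = 0) {b : B}
    (hb : b ≠ 0) : β.flip b ≠ 0 :=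
  fun h => hb (hβB b fun a => LinearMap.congr_fun h a)

end Module

variable [Ring A] [Algebra ℂ A] [Ring B] [Algebra ℂ B] (β : A →ₗ[ℂ] B →ₗ[ℂ] ℂ)
  (hβA : ∀ a : A, (∀ b : B, β a b = 0) → a = 0) (Δ : A →ₗ[ℂ] A ⊗[ℂ] A)
  (hΔ : ∀ (a : A) (b b' : B), pairTT β b b' (Δ a) = β a (b * b'))
include hβA hΔ

theorem rmapC_flip_comul {h : B} (hh : ∀ b, b * h = β 1 b • h) (a : A) :
    rmapC (β.flip h) (Δ a) = β.flip h a • 1 :=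
  sub_eq_zero.mp <| hβA _ fun b => by
    simp [apply_rmapC_flip, hΔ, hh, mul_comm]

theorem lmapC_flip_comul {k : B} (hk : ∀ b, k * b = β 1 b • k) (a : A) :
    lmapC (β.flip k) (Δ a) = β.flip k a • 1 :=
  sub_eq_zero.mp <| hβA _ fun b => by
    simp [apply_lmapC_flip, hΔ, hk, mul_comm]

end Pairing

theorem exists_invariant_functionals_of_faithful_on_dual_general
    {A B : Type*} [Ring A] [Algebra ℂ A]
    [Ring B] [Algebra ℂ B] [FiniteDimensional ℂ B]
    (β : A →ₗ[ℂ] B →ₗ[ℂ] ℂ)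
    (hβA : ∀ a : A, (∀ b : B, β a b = 0) → a = 0)
    (hβB : ∀ b : B, (∀ a : A, β a b = 0) → b = 0)
    (Δ : A →ₗ[ℂ] A ⊗[ℂ] A)
    (hΔ : ∀ (a : A) (b b' : B), pairTT β b b' (Δ a) = β a (b * b'))
    (hεhom : ∀ b b' : B, β 1 (b * b') = β 1 b * β 1 b')
    (hεone : β (1 : A) (1 : B) = 1)
    (ω : B →ₗ[ℂ] ℂ)
    (hω₁ : ∀ b : B, (∀ c : B, ω (b * c) = 0) → b = 0)
    (hω₂ : ∀ c : B, (∀ b : B, ω (b * c) = 0) → c = 0) :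
    (∃ φ : A →ₗ[ℂ] ℂ, φ ≠ 0 ∧ ∀ a : A, rmapC φ (Δ a) = φ a • (1 : A)) ∧
    (∃ ψ : A →ₗ[ℂ] ℂ, ψ ≠ 0 ∧ ∀ a : A, lmapC ψ (Δ a) = ψ a • (1 : A)) := by
  let ε : B →ₐ[ℂ] ℂ := AlgHom.ofLinearMap (β 1) hεone hεhom
  obtain ⟨h, hh0, hh⟩ := exists_ne_zero_forall_mul_left_eq_smul ε ω hω₂
  obtain ⟨k, hk0, hk⟩ := exists_ne_zero_forall_mul_right_eq_smul ε ω hω₁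
  exact ⟨⟨β.flip h, β.flip_apply_ne_zero hβB hh0, rmapC_flip_comul β hβA Δ hΔ hh⟩,
    ⟨β.flip k, β.flip_apply_ne_zero hβB hk0, lmapC_flip_comul β hβA Δ hΔ hk⟩⟩

/-- Let `A`, `B` be finite-dimensional unital ℂ-algebras with a
non-degenerate pairing inducing the coproduct `Δ` on `A`, and suppose the counit
`ε_B = ⟨1, ·⟩` on `B` is a (unital) algebra homomorphism. If there is a faithful
linear functional on `B`, then there exist a non-zero left invariant functional
and a non-zero right invariant functional on `A`. -/
theorem exists_invariant_functionals_of_faithful_on_dual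
    {A B : Type*} [Ring A] [Algebra ℂ A] [FiniteDimensional ℂ A]
    [Ring B] [Algebra ℂ B] [FiniteDimensional ℂ B]
    (β : A →ₗ[ℂ] B →ₗ[ℂ] ℂ)
    (hβA : ∀ a : A, (∀ b : B, β a b = 0) → a = 0)
    (hβB : ∀ b : B, (∀ a : A, β a b = 0) → b = 0)
    (Δ : A →ₗ[ℂ] A ⊗[ℂ] A)
    (hΔ : ∀ (a : A) (b b' : B), pairTT β b b' (Δ a) = β a (b * b'))
    (hεhom : ∀ b b' : B, β 1 (b * b') = β 1 b * β 1 b')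
    (hεone : β (1 : A) (1 : B) = 1)
    (ω : B →ₗ[ℂ] ℂ)
    (hω₁ : ∀ b : B, (∀ c : B, ω (b * c) = 0) → b = 0)
    (hω₂ : ∀ c : B, (∀ b : B, ω (b * c) = 0) → c = 0) :
    (∃ φ : A →ₗ[ℂ] ℂ, φ ≠ 0 ∧ ∀ a : A, rmapC φ (Δ a) = φ a • (1 : A)) ∧
    (∃ ψ : A →ₗ[ℂ] ℂ, ψ ≠ 0 ∧ ∀ a : A, lmapC ψ (Δ a) = ψ a • (1 : A)) :=
  exists_invariant_functionals_of_faithful_on_dual_general β hβA hβB Δ hΔ hεhom hεone ω hω₁ hω₂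
end
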